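/- arXiv:math/0208104 — 2 statements merged into one kernel-verified Lean document; each statement's English description precedes it below -/
import Mathlib

section
/- For u, v ∈ ℂ^m write ⟨u,v⟩ = Σ_{j=1}^m u_j conj(v_j). For N ≥ 1 define (using the principal branch, valid for all N large enough that 1 + ⟨u,v⟩/N lies off the negative real axis) the normalized scaled Szegő kernel of ℂP^m: Π̂_N(u,v) = (1 + ⟨u,v⟩/N)^N / [ (1 + ‖u‖²/N)^{N/2} (1 + ‖v‖²/N)^{N/2} ]. Then as N → ∞, Π̂_N(u,v) → exp( ⟨u,v⟩ − (‖u‖² + ‖v‖²)/2 ) uniformly on compact subsets of ℂ^m × ℂ^m. That is, the 1/√N-scaling limit of the Bergman–Szegő kernel of the N-th power of the hyperplane bundle on ℂP^m is the Bergman–Szegő kernel of the Heisenberg group (Bargmann–Fock) model. -/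
open Filter

/-- The Hermitian inner product `⟨u,v⟩ = ∑ u_j conj(v_j)` on `ℂ^m`. -/
noncomputable def hermInner {m : ℕ} (u v : Fin m → ℂ) : ℂ :=
  ∑ j, u j * (starRingEnd ℂ) (v j)

/-- The squared norm `‖u‖² = ∑ |u_j|²` on `ℂ^m`. -/
noncomputable def sqNorm {m : ℕ} (u : Fin m → ℂ) : ℝ :=
  ∑ j, Complex.normSq (u j)

/-- The normalized Szegő kernel of `ℂP^m` at level `N`, evaluated at points rescaled
by `1/√N`: `Π̂_N(u,v) = (1+⟨u,v⟩/N)^N / [(1+‖u‖²/N)^{N/2}(1+‖v‖²/N)^{N/2}]`. -/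
noncomputable def scaledSzego {m : ℕ} (N : ℕ) (u v : Fin m → ℂ) : ℂ :=
  (1 + hermInner u v / N) ^ N /
    ((((1 + sqNorm u / N) ^ ((N : ℝ) / 2) * (1 + sqNorm v / N) ^ ((N : ℝ) / 2) : ℝ)) : ℂ)

/-- Key estimate: for `‖z‖ ≤ 1/2`, `‖log(1+z) - z‖ ≤ ‖z‖²`. -/
lemma key_log_est {z : ℂ} (hz : ‖z‖ ≤ 1/2) : ‖Complex.log (1 + z) - z‖ ≤ ‖z‖ ^ 2 := by
  have h1 := Complex.norm_log_one_add_sub_self_le (lt_of_le_of_lt hz one_half_lt_one)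
  have h2 : (1 - ‖z‖)⁻¹ ≤ 2 := by
    rw [inv_le_comm₀ (by linarith) (by norm_num)]
    linarith
  calc ‖Complex.log (1 + z) - z‖ ≤ ‖z‖ ^ 2 * (1 - ‖z‖)⁻¹ / 2 := h1
    _ ≤ ‖z‖ ^ 2 * 2 / 2 := by
        have := sq_nonneg ‖z‖
        gcongr
    _ = ‖z‖ ^ 2 := by ring

lemma one_add_ne {z : ℂ} (hz : ‖z‖ ≤ 1/2) : 1 + z ≠ 0 := by
  intro h
  have : z = -1 := by linear_combination h
  rw [this] at hz
  norm_num at hz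

/-- rpow to complex exp of complex log. -/
lemma rpow_eq_cexp {x : ℝ} (hx : 0 ≤ x) (y : ℝ) :
    (((1 + x) ^ y : ℝ) : ℂ) = Complex.exp ((y : ℂ) * Complex.log (1 + (x : ℂ))) := by
  have hx1 : (0:ℝ) < 1 + x := by linarith
  rw [Real.rpow_def_of_pos hx1, Complex.ofReal_exp]
  congr 1
  push_cast [Complex.ofReal_log hx1.le]
  ring


/-- The `1/√N`-scaling limit of the Bergman–Szegő kernel of `O(N) → ℂP^m` is the
Bargmann–Fock (Heisenberg) kernel `exp(⟨u,v⟩ − (‖u‖²+‖v‖²)/2)`, the convergence being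
uniform on compact subsets of `ℂ^m × ℂ^m`. -/
theorem scaled_szego_tendsto_heisenberg (m : ℕ)
    (K : Set ((Fin m → ℂ) × (Fin m → ℂ))) (hK : IsCompact K) :
    TendstoUniformlyOn (fun (N : ℕ) (q : (Fin m → ℂ) × (Fin m → ℂ)) => scaledSzego N q.1 q.2)
      (fun q => Complex.exp (hermInner q.1 q.2 - ((sqNorm q.1 + sqNorm q.2 : ℝ) : ℂ) / 2))
      atTop K := by
  -- bound on K
  have hcont : ContinuousOn
      (fun q : (Fin m → ℂ) × (Fin m → ℂ) => (‖hermInner q.1 q.2‖ + sqNorm q.1 + sqNorm q.2 : ℝ)) K := by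
    apply Continuous.continuousOn
    unfold hermInner sqNorm
    simp only [starRingEnd_apply, Complex.normSq_eq_norm_sq]
    fun_prop
  obtain ⟨R₀, hR₀⟩ := hK.exists_bound_of_continuousOn hcont
  set R : ℝ := max R₀ 1 with hRdef
  have hR1 : (1:ℝ) ≤ R := le_max_right _ _
  have hbound : ∀ q ∈ K, ‖hermInner q.1 q.2‖ ≤ R ∧ sqNorm q.1 ≤ R ∧ sqNorm q.2 ≤ R := by
    intro q hq
    have hs : 0 ≤ sqNorm q.1 := Finset.sum_nonneg fun j _ => Complex.normSq_nonneg _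
    have ht : 0 ≤ sqNorm q.2 := Finset.sum_nonneg fun j _ => Complex.normSq_nonneg _
    have hw : 0 ≤ ‖hermInner q.1 q.2‖ := norm_nonneg _
    have h := hR₀ q hq
    rw [Real.norm_eq_abs, abs_le] at h
    refine ⟨?_, ?_, ?_⟩ <;> [skip; skip; skip] <;>
      · have : R₀ ≤ R := le_max_left _ _
        linarith [h.2]
  rw [Metric.tendstoUniformlyOn_iff]
  intro ε hε
  have hcast : Tendsto (fun N : ℕ => (N : ℝ)) atTop atTop := tendsto_natCast_atTop_atTop
  have hC : Tendsto (fun N : ℕ => 4 * Real.exp (2 * R) * R ^ 2 / (N : ℝ)) atTop (nhds 0) :=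
    tendsto_const_nhds.div_atTop hcast
  filter_upwards [hcast.eventually_ge_atTop (4 * R), hcast.eventually_ge_atTop (2 * R ^ 2),
    hC.eventually_lt_const hε] with N hN4R hN2R hNC q hq
  -- setup
  have hNpos : (0:ℝ) < N := by nlinarith
  have hNne : (N : ℂ) ≠ 0 := by exact_mod_cast ne_of_gt (show (0:ℝ) < (N:ℝ) from hNpos)
  obtain ⟨hw, hs, ht⟩ := hbound q hq
  set w : ℂ := hermInner q.1 q.2 with hwdef
  set s : ℝ := sqNorm q.1 with hsdef
  set t : ℝ := sqNorm q.2 with htdef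
  have hs0 : 0 ≤ s := Finset.sum_nonneg fun j _ => Complex.normSq_nonneg _
  have ht0 : 0 ≤ t := Finset.sum_nonneg fun j _ => Complex.normSq_nonneg _
  have hwN : ‖w / (N:ℂ)‖ ≤ 1/2 := by
    rw [norm_div, Complex.norm_natCast]
    rw [div_le_iff₀ hNpos]
    nlinarith
  have hsN : ‖(s:ℂ) / (N:ℂ)‖ ≤ 1/2 := by
    rw [norm_div, Complex.norm_natCast, Complex.norm_real, Real.norm_eq_abs, abs_of_nonneg hs0]
    rw [div_le_iff₀ hNpos]
    nlinarith
  have htN : ‖(t:ℂ) / (N:ℂ)‖ ≤ 1/2 := by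
    rw [norm_div, Complex.norm_natCast, Complex.norm_real, Real.norm_eq_abs, abs_of_nonneg ht0]
    rw [div_le_iff₀ hNpos]
    nlinarith
  -- the exponent
  set G : ℂ := (N : ℂ) * Complex.log (1 + w / N)
      - (N : ℂ) / 2 * Complex.log (1 + (s:ℂ) / N)
      - (N : ℂ) / 2 * Complex.log (1 + (t:ℂ) / N) with hGdef
  set L : ℂ := w - (((s + t : ℝ)) : ℂ) / 2 with hLdef
  -- scaledSzego = exp G
  have hscal : scaledSzego N q.1 q.2 = Complex.exp G := by
    unfold scaledSzego
    rw [← hwdef, ← hsdef, ← htdef]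
    have h1 : (1 + w / (N:ℂ)) ^ N = Complex.exp ((N:ℂ) * Complex.log (1 + w / N)) := by
      rw [Complex.exp_nat_mul, Complex.exp_log (one_add_ne hwN)]
    have hds : (((1 + s / (N:ℝ)) ^ ((N : ℝ) / 2) : ℝ) : ℂ)
        = Complex.exp ((N:ℂ) / 2 * Complex.log (1 + (s:ℂ) / N)) := by
      have := rpow_eq_cexp (x := s / N) (div_nonneg hs0 hNpos.le) ((N:ℝ)/2)
      rw [this]; push_cast; try ring_nf
    have hdt : (((1 + t / (N:ℝ)) ^ ((N : ℝ) / 2) : ℝ) : ℂ)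
        = Complex.exp ((N:ℂ) / 2 * Complex.log (1 + (t:ℂ) / N)) := by
      have := rpow_eq_cexp (x := t / N) (div_nonneg ht0 hNpos.le) ((N:ℝ)/2)
      rw [this]; push_cast; try ring_nf
    push_cast
    rw [h1, hds, hdt, ← Complex.exp_add, ← Complex.exp_sub, hGdef]
    ring_nf
  -- estimate G - L
  have hGL : ‖G - L‖ ≤ 2 * R ^ 2 / N := by
    have hid : G - L = (N : ℂ) * (Complex.log (1 + w / N) - w / N)
        - (N : ℂ) / 2 * (Complex.log (1 + (s:ℂ) / N) - (s:ℂ) / N)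
        - (N : ℂ) / 2 * (Complex.log (1 + (t:ℂ) / N) - (t:ℂ) / N) := by
      rw [hGdef, hLdef]
      push_cast
      field_simp
      ring
    have e1 : ‖(N : ℂ) * (Complex.log (1 + w / N) - w / N)‖ ≤ R ^ 2 / N := by
      rw [norm_mul, Complex.norm_natCast]
      calc (N:ℝ) * ‖Complex.log (1 + w / N) - w / N‖ ≤ (N:ℝ) * ‖w / (N:ℂ)‖ ^ 2 := by
            gcongr; exact key_log_est hwN
        _ = ‖w‖ ^ 2 / N := by
            rw [norm_div, Complex.norm_natCast]; field_simp
        _ ≤ R ^ 2 / N := by gcongr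
    have e2 : ‖(N : ℂ) / 2 * (Complex.log (1 + (s:ℂ) / N) - (s:ℂ) / N)‖ ≤ R ^ 2 / (2 * N) := by
      rw [norm_mul, norm_div, Complex.norm_natCast]
      have h2 : ‖(2:ℂ)‖ = 2 := by norm_num
      rw [h2]
      calc (N:ℝ) / 2 * ‖Complex.log (1 + (s:ℂ) / N) - (s:ℂ) / N‖
          ≤ (N:ℝ) / 2 * ‖(s:ℂ) / (N:ℂ)‖ ^ 2 := by gcongr; exact key_log_est hsN
        _ = s ^ 2 / (2 * N) := by
            rw [norm_div, Complex.norm_natCast, Complex.norm_real, Real.norm_eq_abs,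
              abs_of_nonneg hs0]
            field_simp
        _ ≤ R ^ 2 / (2 * N) := by gcongr
    have e3 : ‖(N : ℂ) / 2 * (Complex.log (1 + (t:ℂ) / N) - (t:ℂ) / N)‖ ≤ R ^ 2 / (2 * N) := by
      rw [norm_mul, norm_div, Complex.norm_natCast]
      have h2 : ‖(2:ℂ)‖ = 2 := by norm_num
      rw [h2]
      calc (N:ℝ) / 2 * ‖Complex.log (1 + (t:ℂ) / N) - (t:ℂ) / N‖
          ≤ (N:ℝ) / 2 * ‖(t:ℂ) / (N:ℂ)‖ ^ 2 := by gcongr; exact key_log_est htN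
        _ = t ^ 2 / (2 * N) := by
            rw [norm_div, Complex.norm_natCast, Complex.norm_real, Real.norm_eq_abs,
              abs_of_nonneg ht0]
            field_simp
        _ ≤ R ^ 2 / (2 * N) := by gcongr
    calc ‖G - L‖ ≤ ‖(N : ℂ) * (Complex.log (1 + w / N) - w / N)
          - (N : ℂ) / 2 * (Complex.log (1 + (s:ℂ) / N) - (s:ℂ) / N)‖
          + ‖(N : ℂ) / 2 * (Complex.log (1 + (t:ℂ) / N) - (t:ℂ) / N)‖ := by
          rw [hid]; exact norm_sub_le _ _
      _ ≤ (‖(N : ℂ) * (Complex.log (1 + w / N) - w / N)‖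
          + ‖(N : ℂ) / 2 * (Complex.log (1 + (s:ℂ) / N) - (s:ℂ) / N)‖)
          + ‖(N : ℂ) / 2 * (Complex.log (1 + (t:ℂ) / N) - (t:ℂ) / N)‖ := by
          gcongr; exact norm_sub_le _ _
      _ ≤ (R ^ 2 / N + R ^ 2 / (2 * N)) + R ^ 2 / (2 * N) := by gcongr
      _ = 2 * R ^ 2 / N := by field_simp; ring
  have hGL1 : ‖G - L‖ ≤ 1 := by
    refine hGL.trans ?_
    rw [div_le_one hNpos]
    linarith
  -- final estimate
  have hLre : L.re ≤ 2 * R := by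
    have h1 : L.re ≤ ‖L‖ := Complex.re_le_norm L
    have h2 : ‖L‖ ≤ ‖w‖ + ‖(((s + t : ℝ)) : ℂ) / 2‖ := norm_sub_le _ _
    have h3 : ‖(((s + t : ℝ)) : ℂ) / 2‖ = (s + t) / 2 := by
      rw [norm_div, Complex.norm_real, Real.norm_eq_abs, abs_of_nonneg (by linarith)]
      norm_num
    rw [h3] at h2
    linarith
  have key : dist (Complex.exp L) (Complex.exp G) ≤ 4 * Real.exp (2 * R) * R ^ 2 / N := by
    rw [Complex.dist_eq]
    have hfac : Complex.exp L - Complex.exp G = Complex.exp L * (1 - Complex.exp (G - L)) := by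
      rw [mul_sub, mul_one, ← Complex.exp_add]
      ring_nf
    rw [hfac, norm_mul]
    have hexp : ‖Complex.exp L‖ = Real.exp L.re := by
      rw [Complex.norm_exp]
    rw [hexp]
    have h1 : ‖1 - Complex.exp (G - L)‖ ≤ 2 * ‖G - L‖ := by
      rw [norm_sub_rev]
      have := Complex.norm_exp_sub_one_le (x := G - L) hGL1
      exact this
    calc Real.exp L.re * ‖1 - Complex.exp (G - L)‖
        ≤ Real.exp (2 * R) * (2 * (2 * R ^ 2 / N)) := by
          have h2 : ‖1 - Complex.exp (G - L)‖ ≤ 2 * (2 * R ^ 2 / ↑N) :=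
            h1.trans (by gcongr)
          have h3 : Real.exp L.re ≤ Real.exp (2 * R) := Real.exp_le_exp.mpr hLre
          exact mul_le_mul h3 h2 (norm_nonneg _) (Real.exp_nonneg _)
      _ = 4 * Real.exp (2 * R) * R ^ 2 / N := by ring
  calc dist (Complex.exp (hermInner q.1 q.2 - ((sqNorm q.1 + sqNorm q.2 : ℝ) : ℂ) / 2))
        (scaledSzego N q.1 q.2) = dist (Complex.exp L) (Complex.exp G) := by
        rw [hscal, hLdef, ← hwdef, ← hsdef, ← htdef]
    _ ≤ 4 * Real.exp (2 * R) * R ^ 2 / N := key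
    _ < ε := hNC
end

section
/- Let p ≥ 1 and let a < b be integers with 0 ≤ a and b ≤ p. For x ∈ (0,1) with x ∉ [a/p, b/p], one has lim_{N→∞} (1/N) log( Σ_{j=Na}^{Nb} binom(Np, j) x^j (1−x)^{Np−j} ) = −p · min_{t ∈ [a/p, b/p]} I_x(t), where I_x(t) = t log(t/x) + (1−t) log((1−t)/(1−x)) (with the convention 0·log 0 = 0), and this limit is strictly negative. Equivalently: writing x = |z|²/(1+|z|²), the conditional Szegő kernel Π_{|N·[a,b]}(z,z) = Σ_{j=Na}^{Nb} binom(Np,j) |z|^{2j}/(1+|z|²)^{Np} of polynomials of degree Np with exponents confined to the dilated Newton polytope N·[a,b] decays exponentially in N, at the explicit rate p·min_{t∈[a/p,b/p]} I_x(t), at every point z of the classically forbidden region. -/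
open Filter

/-- The rate function `I_x(t) = t log(t/x) + (1−t) log((1−t)/(1−x))` of large deviations
for Bernoulli(x) sums (with the convention `0 · log 0 = 0`, which holds automatically
since `Real.log 0 = 0`). -/
noncomputable def rateFn (x t : ℝ) : ℝ :=
  t * Real.log (t / x) + (1 - t) * Real.log ((1 - t) / (1 - x))

lemma mode_step_up (n k j : ℕ) (hk : k ≤ n) (hj : j < k) :
    n.choose j * k^j * (n-k)^(n-j) ≤ n.choose (j+1) * k^(j+1) * (n-k)^(n-(j+1)) := by
  have h2 : (j+1)*(n-k) ≤ (n-j)*k := by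
    have := Nat.mul_le_mul (show j+1 ≤ k by omega) (show n-k ≤ n-j by omega)
    calc (j+1)*(n-k) ≤ k*(n-j) := this
      _ = (n-j)*k := by ring
  refine Nat.le_of_mul_le_mul_right ?_ (Nat.succ_pos j)
  calc n.choose j * k^j * (n-k)^(n-j) * (j+1)
      = (n.choose j * k^j * (n-k)^(n-(j+1))) * ((j+1)*(n-k)) := by
        rw [show n - j = n - (j+1) + 1 by omega, pow_succ]; ring
    _ ≤ (n.choose j * k^j * (n-k)^(n-(j+1))) * ((n-j)*k) := Nat.mul_le_mul_left _ h2
    _ = (n.choose (j+1) * (j+1)) * k^(j+1) * (n-k)^(n-(j+1)) := by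
        rw [Nat.choose_succ_right_eq, pow_succ]; ring
    _ = n.choose (j+1) * k^(j+1) * (n-k)^(n-(j+1)) * (j+1) := by ring

lemma mode_step_down (n k j : ℕ) (hk : k ≤ j) (hj : j < n) :
    n.choose (j+1) * k^(j+1) * (n-k)^(n-(j+1)) ≤ n.choose j * k^j * (n-k)^(n-j) := by
  have h2 : (n-j)*k ≤ (j+1)*(n-k) := by
    have := Nat.mul_le_mul (show k ≤ j+1 by omega) (show n-j ≤ n-k by omega)
    calc (n-j)*k = k*(n-j) := by ring
      _ ≤ (j+1)*(n-k) := this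
  refine Nat.le_of_mul_le_mul_right ?_ (Nat.succ_pos j)
  calc n.choose (j+1) * k^(j+1) * (n-k)^(n-(j+1)) * (j+1)
      = (n.choose (j+1) * (j+1)) * k^(j+1) * (n-k)^(n-(j+1)) := by ring
    _ = (n.choose j * k^j * (n-k)^(n-(j+1))) * ((n-j)*k) := by
        rw [Nat.choose_succ_right_eq, pow_succ]; ring
    _ ≤ (n.choose j * k^j * (n-k)^(n-(j+1))) * ((j+1)*(n-k)) :=
        Nat.mul_le_mul_left _ h2
    _ = n.choose j * k^j * (n-k)^(n-j) * (j+1) := by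
        rw [show n - j = n - (j+1) + 1 by omega, pow_succ]; ring

lemma mode_nat (n k : ℕ) (hk : k ≤ n) : ∀ j ≤ n,
    n.choose j * k^j * (n-k)^(n-j) ≤ n.choose k * k^k * (n-k)^(n-k) := by
  have up : ∀ d j, j + d = k → n.choose j * k^j * (n-k)^(n-j) ≤ n.choose k * k^k * (n-k)^(n-k) := by
    intro d
    induction d with
    | zero => intro j hj; simp only [Nat.add_zero] at hj; subst hj; exact le_refl _
    | succ d ih =>
      intro j hj
      have hjk : j < k := by omega
      exact le_trans (mode_step_up n k j hk hjk) (ih (j+1) (by omega))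
  have down : ∀ d j, j = k + d → j ≤ n → n.choose j * k^j * (n-k)^(n-j) ≤ n.choose k * k^k * (n-k)^(n-k) := by
    intro d
    induction d with
    | zero => intro j hj _; subst hj; exact le_refl _
    | succ d ih =>
      intro j hj hjn
      have h1 : j = (k + d) + 1 := by omega
      subst h1
      exact le_trans (mode_step_down n k (k+d) (by omega) (by omega)) (ih (k+d) rfl (by omega))
  intro j hjn
  rcases le_or_gt j k with h | h
  · exact up (k - j) j (by omega)
  · exact down (j - k) j (by omega) hjn


lemma choose_lb (n k : ℕ) (hn : 0 < n) (hk : k ≤ n) :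
    1 ≤ ((n:ℝ)+1) * (n.choose k : ℝ) * ((k:ℝ)/n)^k * (1 - (k:ℝ)/n)^(n-k) := by
  have hn' : (0:ℝ) < n := by exact_mod_cast hn
  set t : ℝ := (k:ℝ)/n with htdef
  have h1t : 1 - t = ((n - k : ℕ):ℝ)/n := by
    rw [Nat.cast_sub hk, htdef]; field_simp
  have e1 : ∀ j, j ≤ n → (n.choose j : ℝ) * t^j * (1-t)^(n-j)
      = ((n.choose j * k^j * (n-k)^(n-j) : ℕ) : ℝ) / (n:ℝ)^n := by
    intro j hj
    rw [h1t, htdef, div_pow, div_pow,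
      show (n:ℝ)^n = (n:ℝ)^j * (n:ℝ)^(n-j) by rw [← pow_add]; congr 1; omega]
    push_cast
    field_simp
  have key : ∀ j ∈ Finset.range (n+1), t^j * (1-t)^(n-j) * (n.choose j : ℝ)
      ≤ (n.choose k : ℝ) * t^k * (1-t)^(n-k) := by
    intro j hj
    rw [Finset.mem_range] at hj
    have hj' : j ≤ n := by omega
    calc t^j * (1-t)^(n-j) * (n.choose j:ℝ) = (n.choose j : ℝ) * t^j * (1-t)^(n-j) := by ring
      _ = ((n.choose j * k^j * (n-k)^(n-j) : ℕ) : ℝ) / (n:ℝ)^n := e1 j hj'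
      _ ≤ ((n.choose k * k^k * (n-k)^(n-k) : ℕ) : ℝ) / (n:ℝ)^n := by
          have := mode_nat n k hk j hj'
          exact div_le_div_of_nonneg_right (by exact_mod_cast this) (by positivity) |>.trans_eq rfl
      _ = (n.choose k : ℝ) * t^k * (1-t)^(n-k) := (e1 k hk).symm
  have hsum : (1:ℝ) = ∑ j ∈ Finset.range (n+1), t^j * (1-t)^(n-j) * (n.choose j : ℝ) := by
    rw [← add_pow]; norm_num
  calc (1:ℝ) = ∑ j ∈ Finset.range (n+1), t^j * (1-t)^(n-j) * (n.choose j : ℝ) := hsum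
    _ ≤ (Finset.range (n+1)).card • ((n.choose k : ℝ) * t^k * (1-t)^(n-k)) :=
        Finset.sum_le_card_nsmul _ _ _ key
    _ = ((n:ℝ)+1) * (n.choose k : ℝ) * t^k * (1-t)^(n-k) := by
        rw [Finset.card_range, nsmul_eq_mul]; push_cast; ring


lemma exp_neg_rate (x t : ℝ) (hx0 : 0 < x) (hx1 : x < 1) (ht0 : 0 < t) (ht1 : t < 1)
    (n k : ℕ) (hkn : k ≤ n) (hk : (k:ℝ) = n * t) :
    Real.exp (-(n:ℝ) * rateFn x t) = (x/t)^k * ((1-x)/(1-t))^(n-k) := by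
  have hx1' : (0:ℝ) < 1 - x := by linarith
  have ht1' : (0:ℝ) < 1 - t := by linarith
  have h1 : (x/t)^k = Real.exp ((k:ℝ) * Real.log (x/t)) := by
    rw [Real.exp_nat_mul, Real.exp_log (by positivity)]
  have h2 : ((1-x)/(1-t))^(n-k) = Real.exp (((n-k:ℕ):ℝ) * Real.log ((1-x)/(1-t))) := by
    rw [Real.exp_nat_mul, Real.exp_log (by positivity)]
  rw [h1, h2, ← Real.exp_add]
  congr 1
  rw [Nat.cast_sub hkn, hk]
  simp only [rateFn]
  rw [Real.log_div hx0.ne' ht0.ne', Real.log_div hx1'.ne' ht1'.ne',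
    Real.log_div ht0.ne' hx0.ne', Real.log_div ht1'.ne' hx1'.ne']
  ring

lemma chernoff (x t : ℝ) (hx0 : 0 < x) (hx1 : x < 1) (ht1 : t < 1) (hxt : x ≤ t)
    (n k m : ℕ) (hkm : k ≤ m) (hmn : m ≤ n) (hk : (k:ℝ) = n * t) :
    ∑ j ∈ Finset.Icc k m, (n.choose j : ℝ) * x^j * (1-x)^(n-j)
      ≤ Real.exp (-(n:ℝ) * rateFn x t) := by
  have ht0 : 0 < t := lt_of_lt_of_le hx0 hxt
  have hx1' : (0:ℝ) < 1 - x := by linarith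
  have ht1' : (0:ℝ) < 1 - t := by linarith
  set s : ℝ := t*(1-x)/((1-t)*x) with hs
  have hs1 : 1 ≤ s := by
    rw [hs, le_div_iff₀ (by positivity)]
    nlinarith
  have hs0 : (0:ℝ) < s := lt_of_lt_of_le one_pos hs1
  have hxs : x*s + (1-x) = (1-x)/(1-t) := by
    rw [hs]; field_simp; ring
  have hBs : ((1-x)/(1-t))/s = x/t := by
    rw [hs]; field_simp
  calc ∑ j ∈ Finset.Icc k m, (n.choose j : ℝ) * x^j * (1-x)^(n-j)
      ≤ ∑ j ∈ Finset.Icc k m, ((n.choose j : ℝ) * (x*s)^j * (1-x)^(n-j)) / s^k := by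
        apply Finset.sum_le_sum
        intro j hj
        rw [Finset.mem_Icc] at hj
        have e : ((n.choose j:ℝ) * (x*s)^j * (1-x)^(n-j)) / s^k
            = ((n.choose j:ℝ) * x^j * (1-x)^(n-j)) * s^(j-k) := by
          rw [pow_sub₀ s hs0.ne' hj.1, mul_pow]
          field_simp
        rw [e]
        have h1 : (1:ℝ) ≤ s^(j-k) := one_le_pow₀ hs1
        exact le_mul_of_one_le_right (by positivity) h1
    _ = (∑ j ∈ Finset.Icc k m, (n.choose j : ℝ) * (x*s)^j * (1-x)^(n-j)) / s^k := by
        rw [← Finset.sum_div]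
    _ ≤ (∑ j ∈ Finset.range (n+1), (n.choose j : ℝ) * (x*s)^j * (1-x)^(n-j)) / s^k := by
        apply div_le_div_of_nonneg_right ?_ (by positivity) |>.trans_eq rfl
        apply Finset.sum_le_sum_of_subset_of_nonneg
        · intro j hj
          simp only [Finset.mem_Icc, Finset.mem_range] at *
          omega
        · intro j _ _
          positivity
    _ = (x*s + (1-x))^n / s^k := by
        rw [add_pow]
        congr 1
        exact Finset.sum_congr rfl (fun j _ => by ring)
    _ = Real.exp (-(n:ℝ) * rateFn x t) := by
        rw [exp_neg_rate x t hx0 hx1 ht0 ht1 n k (le_trans hkm hmn) hk, hxs,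
          show ((1-x)/(1-t))^n = ((1-x)/(1-t))^(n-k) * ((1-x)/(1-t))^k by
            rw [← pow_add]; congr 1; omega]
        rw [mul_div_assoc, ← div_pow, hBs]
        ring

lemma lower_bd (x t : ℝ) (hx0 : 0 < x) (hx1 : x < 1) (ht0 : 0 < t) (ht1 : t < 1)
    (n k : ℕ) (hn : 0 < n) (hkn : k ≤ n) (hk : (k:ℝ) = n * t) :
    Real.exp (-(n:ℝ) * rateFn x t) / ((n:ℝ)+1) ≤ (n.choose k : ℝ) * x^k * (1-x)^(n-k) := by
  have hx1' : (0:ℝ) < 1 - x := by linarith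
  have ht1' : (0:ℝ) < 1 - t := by linarith
  have hn' : (0:ℝ) < n := by exact_mod_cast hn
  have htkn : (k:ℝ)/n = t := by rw [hk]; field_simp
  have h := choose_lb n k hn hkn
  rw [htkn] at h
  have key : 1 / ((t^k * (1-t)^(n-k)) * ((n:ℝ)+1)) ≤ (n.choose k : ℝ) := by
    rw [div_le_iff₀ (by positivity)]
    calc (1:ℝ) ≤ ((n:ℝ)+1) * (n.choose k : ℝ) * t^k * (1-t)^(n-k) := h
      _ = (n.choose k : ℝ) * (t^k * (1-t)^(n-k) * ((n:ℝ)+1)) := by ring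
  calc Real.exp (-(n:ℝ) * rateFn x t) / ((n:ℝ)+1)
      = (x^k * (1-x)^(n-k)) * (1 / ((t^k * (1-t)^(n-k)) * ((n:ℝ)+1))) := by
        rw [exp_neg_rate x t hx0 hx1 ht0 ht1 n k hkn hk, div_pow, div_pow]
        field_simp
    _ ≤ (x^k * (1-x)^(n-k)) * (n.choose k : ℝ) := by
        exact mul_le_mul_of_nonneg_left key (by positivity)
    _ = (n.choose k : ℝ) * x^k * (1-x)^(n-k) := by ring


lemma rate_eq (x : ℝ) (hx0 : 0 < x) (hx1 : x < 1) : ∀ t ∈ Set.Icc (0:ℝ) 1,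
    rateFn x t = t * Real.log t - t * Real.log x
      + ((1-t) * Real.log (1-t) - (1-t) * Real.log (1-x)) := by
  rintro t ⟨ht0, ht1⟩
  simp only [rateFn]
  rcases eq_or_lt_of_le ht0 with h0 | h0
  · rw [← h0]
    simp [Real.log_div (by norm_num : (1:ℝ) ≠ 0) (by linarith : (1:ℝ)-x ≠ 0)]
  · rcases eq_or_lt_of_le ht1 with h1 | h1
    · rw [h1]
      simp [Real.log_div (by linarith : (1:ℝ) ≠ 0) (by linarith : x ≠ 0)]
    · rw [Real.log_div (by linarith) (by linarith), Real.log_div (by linarith) (by linarith)]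
      ring

lemma rate_contOn (x : ℝ) (hx0 : 0 < x) (hx1 : x < 1) :
    ContinuousOn (rateFn x) (Set.Icc (0:ℝ) 1) := by
  have gc : Continuous (fun t:ℝ => t * Real.log t - t * Real.log x
      + ((1-t) * Real.log (1-t) - (1-t) * Real.log (1-x))) := by
    refine Continuous.add (Continuous.sub Real.continuous_mul_log
      (continuous_id.mul continuous_const)) (Continuous.sub ?_
      ((continuous_const.sub continuous_id).mul continuous_const))
    exact Real.continuous_mul_log.comp (continuous_const.sub continuous_id)
  exact gc.continuousOn.congr (rate_eq x hx0 hx1)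

lemma rate_hasDeriv (x t : ℝ) (hx0 : 0 < x) (hx1 : x < 1) (ht0 : 0 < t) (ht1 : t < 1) :
    HasDerivAt (rateFn x) (Real.log (t/x) - Real.log ((1-t)/(1-x))) t := by
  have hx1' : (0:ℝ) < 1 - x := by linarith
  have ht1' : (0:ℝ) < 1 - t := by linarith
  have d1 : HasDerivAt (fun u : ℝ => Real.log (u/x)) ((t/x)⁻¹ * (1/x)) t :=
    (Real.hasDerivAt_log (by positivity)).comp t ((hasDerivAt_id t).div_const x)
  have d2 : HasDerivAt (fun u : ℝ => Real.log ((1-u)/(1-x))) (((1-t)/(1-x))⁻¹ * (-1/(1-x))) t := by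
    have inner : HasDerivAt (fun u : ℝ => (1-u)/(1-x)) (-1/(1-x)) t :=
      ((hasDerivAt_id t).const_sub 1).div_const (1-x)
    exact (Real.hasDerivAt_log (by positivity)).comp t inner
  have D : HasDerivAt (rateFn x)
      ((1 * Real.log (t/x) + t * ((t/x)⁻¹ * (1/x)))
        + ((-1) * Real.log ((1-t)/(1-x)) + (1-t) * (((1-t)/(1-x))⁻¹ * (-1/(1-x))))) t := by
    exact ((hasDerivAt_id t).mul d1).add (((hasDerivAt_id t).const_sub 1).mul d2)
  convert D using 1
  have e1 : t * ((t/x)⁻¹ * (1/x)) = 1 := by field_simp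
  have e2 : (1-t) * (((1-t)/(1-x))⁻¹ * (-1/(1-x))) = -1 := by field_simp
  rw [e1, e2]
  ring

lemma rate_monoOn (x l : ℝ) (hx0 : 0 < x) (hx1 : x < 1) (hxl : x ≤ l) :
    MonotoneOn (rateFn x) (Set.Icc l 1) := by
  have hl0 : 0 < l := lt_of_lt_of_le hx0 hxl
  apply monotoneOn_of_deriv_nonneg (convex_Icc l 1)
    ((rate_contOn x hx0 hx1).mono (Set.Icc_subset_Icc hl0.le le_rfl))
  · rw [interior_Icc]
    rintro t ⟨ht1, ht2⟩
    exact (rate_hasDeriv x t hx0 hx1 (hl0.trans ht1) ht2).differentiableAt.differentiableWithinAt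
  · rw [interior_Icc]
    rintro t ⟨ht1, ht2⟩
    have h0 : 0 < t := hl0.trans ht1
    rw [(rate_hasDeriv x t hx0 hx1 h0 ht2).deriv]
    have hA : (0:ℝ) ≤ Real.log (t/x) := Real.log_nonneg (by rw [le_div_iff₀ hx0]; linarith)
    have hB : Real.log ((1-t)/(1-x)) ≤ 0 :=
      Real.log_nonpos (div_nonneg (by linarith) (by linarith))
        (by rw [div_le_one (by linarith)]; linarith)
    linarith

lemma rate_antiOn (x u : ℝ) (hx0 : 0 < x) (hx1 : x < 1) (hxu : u ≤ x) :
    AntitoneOn (rateFn x) (Set.Icc 0 u) := by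
  have hu1 : u < 1 := lt_of_le_of_lt hxu hx1
  apply antitoneOn_of_deriv_nonpos (convex_Icc 0 u)
    ((rate_contOn x hx0 hx1).mono (Set.Icc_subset_Icc le_rfl hu1.le))
  · rw [interior_Icc]
    rintro t ⟨ht1, ht2⟩
    exact (rate_hasDeriv x t hx0 hx1 ht1 (by linarith)).differentiableAt.differentiableWithinAt
  · rw [interior_Icc]
    rintro t ⟨ht1, ht2⟩
    have ht1' : t < 1 := by linarith
    rw [(rate_hasDeriv x t hx0 hx1 ht1 ht1').deriv]
    have hA : Real.log (t/x) ≤ 0 :=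
      Real.log_nonpos (by positivity) (by rw [div_le_one hx0]; linarith)
    have hB : (0:ℝ) ≤ Real.log ((1-t)/(1-x)) :=
      Real.log_nonneg (by rw [le_div_iff₀ (by linarith)]; linarith)
    linarith

lemma rate_pos (x t : ℝ) (hx0 : 0 < x) (hx1 : x < 1) (ht0 : 0 < t) (ht1 : t < 1)
    (hne : t ≠ x) : 0 < rateFn x t := by
  have hx1' : (0:ℝ) < 1 - x := by linarith
  have ht1' : (0:ℝ) < 1 - t := by linarith
  have h1 : Real.log (x/t) < x/t - 1 := by
    apply Real.log_lt_sub_one_of_pos (by positivity)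
    intro h
    rw [div_eq_one_iff_eq ht0.ne'] at h
    exact hne h.symm
  have h2 : Real.log ((1-x)/(1-t)) ≤ (1-x)/(1-t) - 1 :=
    Real.log_le_sub_one_of_pos (by positivity)
  have key : rateFn x t = -(t * Real.log (x/t) + (1-t) * Real.log ((1-x)/(1-t))) := by
    simp only [rateFn]
    rw [Real.log_div ht0.ne' hx0.ne', Real.log_div ht1'.ne' hx1'.ne',
      Real.log_div hx0.ne' ht0.ne', Real.log_div hx1'.ne' ht1'.ne']
    ring
  have e1 : t * (x/t - 1) = x - t := by field_simp
  have e2 : (1-t) * ((1-x)/(1-t) - 1) = t - x := by field_simp; ring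
  have b1 : t * Real.log (x/t) < x - t := by
    rw [← e1]; exact mul_lt_mul_of_pos_left h1 ht0
  have b2 : (1-t) * Real.log ((1-x)/(1-t)) ≤ t - x := by
    rw [← e2]; exact mul_le_mul_of_nonneg_left h2 ht1'.le
  rw [key]; linarith

lemma rate_reflect (x t : ℝ) : rateFn (1-x) (1-t) = rateFn x t := by
  simp only [rateFn]
  rw [show (1:ℝ)-(1-t) = t by ring, show (1:ℝ)-(1-x) = x by ring]
  ring

lemma sInf_right (x l u : ℝ) (hx0 : 0 < x) (hx1 : x < 1) (hxl : x < l) (hlu : l ≤ u)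
    (hu1 : u ≤ 1) : sInf (rateFn x '' Set.Icc l u) = rateFn x l := by
  apply IsLeast.csInf_eq
  refine ⟨⟨l, ⟨le_rfl, hlu⟩, rfl⟩, ?_⟩
  rintro y ⟨s, hs, rfl⟩
  exact rate_monoOn x l hx0 hx1 hxl.le ⟨le_rfl, hlu.trans hu1⟩
    ⟨hs.1, hs.2.trans hu1⟩ hs.1

lemma sInf_left (x l u : ℝ) (hx0 : 0 < x) (hx1 : x < 1) (hl0 : 0 ≤ l) (hlu : l ≤ u)
    (hux : u < x) : sInf (rateFn x '' Set.Icc l u) = rateFn x u := by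
  apply IsLeast.csInf_eq
  refine ⟨⟨u, ⟨hlu, le_rfl⟩, rfl⟩, ?_⟩
  rintro y ⟨s, hs, rfl⟩
  exact rate_antiOn x u hx0 hx1 hux.le ⟨hl0.trans hs.1, hs.2⟩ ⟨hl0.trans hlu, le_rfl⟩ hs.2


lemma sum_reflect (P A B : ℕ) (hAB : A ≤ B) (hBP : B ≤ P) (x : ℝ) :
    ∑ j ∈ Finset.Icc A B, (P.choose j : ℝ) * x^j * (1-x)^(P-j)
      = ∑ j ∈ Finset.Icc (P-B) (P-A), (P.choose j : ℝ) * (1-x)^j * x^(P-j) := by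
  apply Finset.sum_nbij' (i := fun j => P - j) (j := fun j => P - j)
  · intro a ha
    simp only [Finset.mem_Icc] at *
    omega
  · intro a ha
    simp only [Finset.mem_Icc] at *
    omega
  · intro a ha
    simp only [Finset.mem_Icc] at ha
    omega
  · intro a ha
    simp only [Finset.mem_Icc] at ha
    omega
  · intro a ha
    simp only [Finset.mem_Icc] at ha
    rw [Nat.choose_symm (by omega), show P - (P - a) = a by omega]
    ring

lemma log_lin_div_tendsto (p : ℕ) (hp : 0 < p) :
    Tendsto (fun N : ℕ => Real.log ((N:ℝ) * p + 1) / N) atTop (nhds 0) := by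
  have h1 : Tendsto (fun y : ℝ => Real.log y / y) atTop (nhds 0) :=
    Real.isLittleO_log_id_atTop.tendsto_div_nhds_zero
  have hp' : (0:ℝ) < p := by exact_mod_cast hp
  have h2 : Tendsto (fun N : ℕ => (N:ℝ) * p + 1) atTop atTop :=
    tendsto_atTop_add_const_right atTop 1
      (tendsto_natCast_atTop_atTop.atTop_mul_const hp')
  have h3 : Tendsto (fun N : ℕ => Real.log ((N:ℝ)*p+1) / ((N:ℝ)*p+1)) atTop (nhds 0) :=
    h1.comp h2
  have h4 : Tendsto (fun N : ℕ => ((N:ℝ)*p+1) / N) atTop (nhds (p:ℝ)) := by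
    have : Tendsto (fun N : ℕ => (p:ℝ) + 1/N) atTop (nhds ((p:ℝ) + 0)) :=
      tendsto_const_nhds.add tendsto_one_div_atTop_nhds_zero_nat
    rw [add_zero] at this
    apply this.congr'
    filter_upwards [eventually_ge_atTop 1] with N hN
    have hN' : (N:ℝ) ≠ 0 := by positivity
    field_simp
  have := h3.mul h4
  rw [zero_mul] at this
  apply this.congr'
  filter_upwards [eventually_ge_atTop 1] with N hN
  have hN' : (N:ℝ) ≠ 0 := by positivity
  have hd : ((N:ℝ)*p+1) ≠ 0 := by positivity
  field_simp


lemma core (p a b : ℕ) (hab : a < b) (hbp : b ≤ p) (x : ℝ) (hx0 : 0 < x) (hx1 : x < 1)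
    (hxa : x < (a:ℝ)/p) :
    Tendsto (fun N : ℕ => (1/(N:ℝ)) * Real.log (∑ j ∈ Finset.Icc (N*a) (N*b),
        (((N*p).choose j : ℝ)) * x^j * (1-x)^(N*p - j))) atTop
      (nhds (-((p:ℝ) * rateFn x ((a:ℝ)/p)))) := by
  have hp : 0 < p := by omega
  have hp' : (0:ℝ) < p := by exact_mod_cast hp
  set t : ℝ := (a:ℝ)/p with htdef
  have ht0 : 0 < t := lt_trans hx0 hxa
  have ht1 : t < 1 := by
    rw [htdef, div_lt_one hp']
    exact_mod_cast lt_of_lt_of_le hab hbp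
  set S : ℕ → ℝ := fun N => ∑ j ∈ Finset.Icc (N*a) (N*b),
      (((N*p).choose j : ℝ)) * x^j * (1-x)^(N*p - j) with hS
  have key : ∀ N : ℕ, 1 ≤ N →
      -((p:ℝ)*rateFn x t) - Real.log ((N:ℝ)*p+1)/N ≤ (1/(N:ℝ)) * Real.log (S N)
       ∧ (1/(N:ℝ)) * Real.log (S N) ≤ -((p:ℝ)*rateFn x t) := by
    intro N hN
    have hN' : (0:ℝ) < N := by exact_mod_cast hN
    have hk : ((N*a : ℕ):ℝ) = ((N*p : ℕ):ℝ) * t := by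
      push_cast
      rw [htdef]
      field_simp
    have hkm : N*a ≤ N*b := Nat.mul_le_mul_left N hab.le
    have hmn : N*b ≤ N*p := Nat.mul_le_mul_left N hbp
    have upper := chernoff x t hx0 hx1 ht1 hxa.le (N*p) (N*a) (N*b) hkm hmn hk
    have hn0 : 0 < N*p := Nat.mul_pos (by omega) hp
    have lower1 := lower_bd x t hx0 hx1 ht0 ht1 (N*p) (N*a) hn0 (le_trans hkm hmn) hk
    have hterm : ((N*p).choose (N*a) : ℝ) * x^(N*a) * (1-x)^(N*p - N*a) ≤ S N := by
      apply Finset.single_le_sum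
        (f := fun j => (((N*p).choose j : ℝ)) * x^j * (1-x)^(N*p - j))
      · intro j hj
        have h1 : (0:ℝ) ≤ 1 - x := by linarith
        exact mul_nonneg (mul_nonneg (Nat.cast_nonneg _) (pow_nonneg hx0.le _))
          (pow_nonneg h1 _)
      · exact Finset.mem_Icc.mpr ⟨le_rfl, hkm⟩
    have hexp : (0:ℝ) < Real.exp (-((N*p:ℕ):ℝ) * rateFn x t) / (((N*p:ℕ):ℝ)+1) := by
      positivity
    have hSpos : 0 < S N := lt_of_lt_of_le hexp (le_trans lower1 hterm)
    have hSub : Real.log (S N) ≤ -((N*p:ℕ):ℝ) * rateFn x t :=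
      (Real.log_le_iff_le_exp hSpos).mpr upper
    have hSlb : -((N*p:ℕ):ℝ) * rateFn x t - Real.log (((N*p:ℕ):ℝ)+1) ≤ Real.log (S N) := by
      have h := Real.log_le_log hexp (le_trans lower1 hterm)
      rwa [Real.log_div (Real.exp_ne_zero _) (by positivity), Real.log_exp] at h
    have hcast : ((N*p:ℕ):ℝ) = (N:ℝ)*p := by push_cast; ring
    constructor
    · have e2 : (1/(N:ℝ)) * (-((N*p:ℕ):ℝ) * rateFn x t - Real.log (((N*p:ℕ):ℝ)+1))
          = -((p:ℝ)*rateFn x t) - Real.log ((N:ℝ)*p+1)/N := by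
        rw [hcast]
        field_simp
        all_goals ring
      calc -((p:ℝ)*rateFn x t) - Real.log ((N:ℝ)*p+1)/N
          = (1/(N:ℝ)) * (-((N*p:ℕ):ℝ) * rateFn x t - Real.log (((N*p:ℕ):ℝ)+1)) := e2.symm
        _ ≤ (1/(N:ℝ)) * Real.log (S N) :=
            mul_le_mul_of_nonneg_left hSlb (by positivity)
    · have e1 : (1/(N:ℝ)) * (-((N*p:ℕ):ℝ) * rateFn x t) = -((p:ℝ) * rateFn x t) := by
        rw [hcast]
        field_simp
      calc (1/(N:ℝ)) * Real.log (S N)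
          ≤ (1/(N:ℝ)) * (-((N*p:ℕ):ℝ) * rateFn x t) :=
            mul_le_mul_of_nonneg_left hSub (by positivity)
        _ = -((p:ℝ) * rateFn x t) := e1
  have hg : Tendsto (fun N : ℕ => -((p:ℝ)*rateFn x t) - Real.log ((N:ℝ)*p+1)/N) atTop
      (nhds (-((p:ℝ)*rateFn x t))) := by
    have := tendsto_const_nhds (x := -((p:ℝ)*rateFn x t)) (f := atTop (α := ℕ))
      |>.sub (log_lin_div_tendsto p hp)
    rwa [sub_zero] at this
  refine tendsto_of_tendsto_of_tendsto_of_le_of_le' hg tendsto_const_nhds ?_ ?_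
  · filter_upwards [eventually_ge_atTop 1] with N hN
    exact (key N hN).1
  · filter_upwards [eventually_ge_atTop 1] with N hN
    exact (key N hN).2

/-- Exponential decay of the conditional Szegő kernel of the one-dimensional Newton
polytope `[a,b]` in the classically forbidden region: for `x = |z|²/(1+|z|²) ∉ [a/p,b/p]`,
`(1/N) log ∑_{j=Na}^{Nb} binom(Np,j) x^j (1−x)^{Np−j} → −p·min_{t∈[a/p,b/p]} I_x(t) < 0`. -/
theorem conditional_szego_forbidden_decay
    (p a b : ℕ) (hp : 1 ≤ p) (hab : a < b) (hbp : b ≤ p)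
    (x : ℝ) (hx0 : 0 < x) (hx1 : x < 1)
    (hxf : x ∉ Set.Icc ((a : ℝ) / p) ((b : ℝ) / p)) :
    Tendsto (fun N : ℕ => (1 / (N : ℝ)) *
        Real.log (∑ j ∈ Finset.Icc (N * a) (N * b),
          (((N * p).choose j : ℝ)) * x ^ j * (1 - x) ^ (N * p - j)))
      atTop
      (nhds (-((p : ℝ) * sInf (rateFn x '' Set.Icc ((a : ℝ) / p) ((b : ℝ) / p))))) ∧
    -((p : ℝ) * sInf (rateFn x '' Set.Icc ((a : ℝ) / p) ((b : ℝ) / p))) < 0 := by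
  have hp0 : (0:ℝ) < p := by exact_mod_cast hp
  have habR : (a:ℝ) ≤ b := by exact_mod_cast hab.le
  have hab' : (a:ℝ)/p ≤ (b:ℝ)/p := by gcongr
  have hb1 : (b:ℝ)/p ≤ 1 := by rw [div_le_one hp0]; exact_mod_cast hbp
  have hcases : x < (a:ℝ)/p ∨ (b:ℝ)/p < x := by
    rw [Set.mem_Icc] at hxf
    push_neg at hxf
    rcases le_or_gt ((a:ℝ)/p) x with h | h
    · exact Or.inr (hxf h)
    · exact Or.inl h
  rcases hcases with hxa | hxb
  · -- x below the interval
    have ht0 : 0 < (a:ℝ)/p := hx0.trans hxa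
    have ht1 : (a:ℝ)/p < 1 := by
      rw [div_lt_one hp0]
      exact_mod_cast lt_of_lt_of_le hab hbp
    rw [sInf_right x ((a:ℝ)/p) ((b:ℝ)/p) hx0 hx1 hxa hab' hb1]
    constructor
    · exact core p a b hab hbp x hx0 hx1 hxa
    · have hpos := rate_pos x ((a:ℝ)/p) hx0 hx1 ht0 ht1 (ne_of_gt hxa)
      have := mul_pos hp0 hpos
      linarith
  · -- x above the interval
    have hb0 : 0 < b := by omega
    have ht0 : 0 < (b:ℝ)/p := by positivity
    have ht1 : (b:ℝ)/p < 1 := lt_trans hxb hx1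
    rw [sInf_left x ((a:ℝ)/p) ((b:ℝ)/p) hx0 hx1 (by positivity) hab' hxb]
    have hcastb : ((p-b:ℕ):ℝ) = (p:ℝ) - b := by
      rw [Nat.cast_sub hbp]
    have hpb : ((p-b:ℕ):ℝ)/p = 1 - (b:ℝ)/p := by
      rw [hcastb, sub_div, div_self hp0.ne']
    have hxa' : 1 - x < ((p-b:ℕ):ℝ)/p := by
      rw [hpb]
      linarith
    have hcore := core p (p-b) (p-a) (by omega) (by omega) (1-x) (by linarith) (by linarith) hxa'
    rw [hpb, rate_reflect x ((b:ℝ)/p)] at hcore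
    constructor
    · apply hcore.congr
      intro N
      congr 1
      have e1 : N*(p-b) = N*p - N*b := by rw [Nat.mul_sub]
      have e2 : N*(p-a) = N*p - N*a := by rw [Nat.mul_sub]
      rw [show (1:ℝ)-(1-x) = x by ring, e1, e2,
        ← sum_reflect (N*p) (N*a) (N*b) (Nat.mul_le_mul_left N hab.le)
          (Nat.mul_le_mul_left N hbp) x]
    · have hpos := rate_pos x ((b:ℝ)/p) hx0 hx1 ht0 ht1 (ne_of_lt hxb)
      have := mul_pos hp0 hpos
      linarith
end
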